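/- Let G be a nonabelian finite thin p-group (p prime). Then for every i ≥ 1, the quotient γ_i(G)/γ_{i+1}(G) of consecutive terms of the lower central series is an elementary abelian p-group of order at most p², i.e., it has exponent dividing p and cardinality at most p². -/

import Mathlib

/-!
The `p`-th power map kills every factor `γ_i/γ_{i+1}`. For `i = 1` this follows from thinness of
the abelianization `A = G/[G, G]`: `A` is not cyclic (a nilpotent group with cyclic abelianization is
abelian), so if it had an element of order `p²` it would contain `u` of order `p²` and `v ∉ ⟨u⟩`
of order `p`, and then the `p` cyclic subgroups `⟨u w⟩` (`w ∈ ⟨v⟩`) together with `⟨v⟩` and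
`⟨u^p v⟩` are `p + 2` pairwise incomparable subgroups. The statement propagates along the
series because `[z, g]^p ≡ [z^p, g]` modulo `γ_{i+2}` when `z ∈ γ_i`.

Finally `γ_i/γ_{i+1}` is a central subgroup of exponent `p` of `G/γ_{i+1}`; if it had order at
least `p³`, its more than `p + 1` subgroups of order `p` would be a normal antichain.
-/

open Subgroup
open scoped commutatorElement

/-- A finite `p`-group is *thin* if every antichain in the lattice of its normal subgroups
contains at most `p + 1` elements. -/
def IsThinPGroup (p : ℕ) (G : Type*) [Group G] : Prop :=
  ∀ S : Set (Subgroup G), (∀ N ∈ S, N.Normal) → IsAntichain (· ≤ ·) S → S.ncard ≤ p + 1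

section Subgroups

variable {G : Type*} [Group G]

theorem Subgroup.isAntichain_of_card_eq [Finite G] {S : Set (Subgroup G)} {n : ℕ}
    (hS : ∀ H ∈ S, Nat.card H = n) : IsAntichain (· ≤ ·) S :=
  fun H hH K hK hne hle => hne (eq_of_le_of_card_ge hle (by rw [hS H hH, hS K hK]))

theorem Subgroup.normal_of_le_center {H : Subgroup G} (h : H ≤ center G) : H.Normal :=
  ⟨fun a ha g => by rwa [mem_center_iff.mp (h ha) g, mul_inv_cancel_right]⟩

variable (G) in
def Subgroup.centerTorsionBy (n : ℕ) : Subgroup G where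
  carrier := {x | x ∈ center G ∧ x ^ n = 1}
  one_mem' := ⟨one_mem _, one_pow n⟩
  mul_mem' := fun {a b} ⟨ha, han⟩ ⟨hb, hbn⟩ =>
    ⟨mul_mem ha hb, by rw [Commute.mul_pow (mem_center_iff.mp hb a), han, hbn, one_mul]⟩
  inv_mem' := fun {a} ⟨ha, han⟩ => ⟨inv_mem ha, by rw [inv_pow, han, inv_one]⟩

theorem commutatorElement_pow_left_of_mem_center {a b : G} (h : ⁅a, b⁆ ∈ center G) (n : ℕ) :
    ⁅a ^ n, b⁆ = ⁅a, b⁆ ^ n := by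
  induction n with
  | zero => simp
  | succ n ih =>
    calc ⁅a ^ (n + 1), b⁆ = a * ⁅a ^ n, b⁆ * a⁻¹ * ⁅a, b⁆ := by
          simp only [commutatorElement_def]; group
      _ = ⁅a, b⁆ ^ (n + 1) := by
          rw [ih, mem_center_iff.mp (pow_mem h n) a, mul_inv_cancel_right, pow_succ]

variable {p : ℕ} [Fact p.Prime]

theorem Subgroup.inf_zpowers_eq_bot_of_orderOf_eq_prime [Finite G] {H : Subgroup G} {v : G}
    (hv : orderOf v = p) (hvH : v ∉ H) : H ⊓ zpowers v = ⊥ := by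
  have hdvd : Nat.card (H ⊓ zpowers v : Subgroup G) ∣ p :=
    hv ▸ Nat.card_zpowers v ▸ card_dvd_of_le inf_le_right
  rcases (Fact.out : p.Prime).eq_one_or_self_of_dvd _ hdvd with h | h
  · exact card_eq_one.mp h
  · refine absurd ?_ hvH
    rw [← hv, ← Nat.card_zpowers] at h
    exact ((eq_of_le_of_card_ge inf_le_right h.ge).ge (mem_zpowers v)).1

open Classical in
theorem Subgroup.card_sub_one_le_mul_ncard_zpowers [Finite G] {W : Subgroup G}
    (hW : ∀ x ∈ W, x ^ p = 1) :
    Nat.card W - 1 ≤ (p - 1) * (zpowers '' ((W : Set G) \ {1})).ncard := by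
  have := Fintype.ofFinite G
  have hcard (H : Subgroup G) : ((H : Set G).toFinset.erase 1).card = Nat.card H - 1 := by
    rw [Finset.card_erase_of_mem (by simp [H.one_mem]), Set.toFinset_card, Nat.card_eq_fintype_card]
    rfl
  have hT : ((W : Set G).toFinset.erase 1 : Set G) = (W : Set G) \ {1} := by ext; simp
  rw [← hT, ← Finset.coe_image, Set.ncard_coe_finset, ← hcard]
  refine Finset.card_le_mul_card_image _ _ fun L hL => ?_
  obtain ⟨x, hx, rfl⟩ := Finset.mem_image.mp hL
  have hxW : x ∈ W ∧ x ≠ 1 := by simpa [and_comm] using hx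
  calc _ ≤ ((zpowers x : Set G).toFinset.erase 1).card := by
        refine Finset.card_le_card fun y hy => ?_
        simp only [Finset.mem_filter, Finset.mem_erase, Set.mem_toFinset] at hy ⊢
        exact ⟨hy.1.1, hy.2 ▸ mem_zpowers y⟩
    _ = p - 1 := by rw [hcard, Nat.card_zpowers, orderOf_eq_prime (hW x hxW.1) hxW.2]

end Subgroups

section LowerCentralSeries

variable {G : Type*} [Group G]

theorem Subgroup.map_lowerCentralSeries_le_center (n : ℕ) :
    ((⊤ : Subgroup G).lowerCentralSeries n).map
      (QuotientGroup.mk' ((⊤ : Subgroup G).lowerCentralSeries (n + 1))) ≤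
      center (G ⧸ (⊤ : Subgroup G).lowerCentralSeries (n + 1)) := by
  set f := QuotientGroup.mk' ((⊤ : Subgroup G).lowerCentralSeries (n + 1))
  have hmap (k : ℕ) :
      ((⊤ : Subgroup G).lowerCentralSeries k).map f = (⊤ : Subgroup _).lowerCentralSeries k := by
    rw [map_lowerCentralSeries, map_top_of_surjective f (QuotientGroup.mk'_surjective _)]
  rw [hmap, ← centralizer_univ, ← coe_top, ← commutator_eq_bot_iff_le_centralizer,
    ← lowerCentralSeries_succ, ← hmap, QuotientGroup.map_mk'_self]

theorem pow_mem_lowerCentralSeries_add_two {p n : ℕ}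
    (h : ∀ x ∈ (⊤ : Subgroup G).lowerCentralSeries n,
      x ^ p ∈ (⊤ : Subgroup G).lowerCentralSeries (n + 1)) :
    ∀ y ∈ (⊤ : Subgroup G).lowerCentralSeries (n + 1),
      y ^ p ∈ (⊤ : Subgroup G).lowerCentralSeries (n + 2) := by
  set N := (⊤ : Subgroup G).lowerCentralSeries (n + 2)
  set ρ := QuotientGroup.mk' N
  suffices (⊤ : Subgroup G).lowerCentralSeries (n + 1) ≤ (centerTorsionBy _ p).comap ρ from
    fun y hy => by simpa [← QuotientGroup.eq_one_iff, ρ] using (this hy).2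
  rw [Subgroup.lowerCentralSeries_succ, commutator_le]
  intro z hz g _
  have hcen : ρ ⁅z, g⁆ ∈ center (G ⧸ N) := map_lowerCentralSeries_le_center (n + 1)
    (mem_map_of_mem _ (commutator_mem_commutator hz (mem_top g)))
  refine ⟨hcen, ?_⟩
  rw [map_commutatorElement] at hcen
  calc ρ ⁅z, g⁆ ^ p = ⁅ρ z, ρ g⁆ ^ p := by rw [map_commutatorElement]
    _ = ⁅ρ z ^ p, ρ g⁆ := (commutatorElement_pow_left_of_mem_center hcen p).symm
    _ = 1 := by
      rw [← map_pow, ← map_commutatorElement, QuotientGroup.mk'_apply, QuotientGroup.eq_one_iff]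
      exact commutator_mem_commutator (h z hz) (mem_top g)

theorem Subgroup.lowerCentralSeries_eq_bot_of_succ_eq [Group.IsNilpotent G] {n : ℕ}
    (h : (⊤ : Subgroup G).lowerCentralSeries (n + 1) = (⊤ : Subgroup G).lowerCentralSeries n) :
    (⊤ : Subgroup G).lowerCentralSeries n = ⊥ := by
  have hconst (k : ℕ) :
      (⊤ : Subgroup G).lowerCentralSeries (n + k) = (⊤ : Subgroup G).lowerCentralSeries n := by
    induction k with
    | zero => rfl
    | succ k ih => rw [← add_assoc, lowerCentralSeries_succ, ih, ← lowerCentralSeries_succ, h]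
  obtain ⟨m, hm⟩ := nilpotent_iff_lowerCentralSeries.mp ‹_›
  rw [← hconst m, eq_bot_iff, ← hm]
  exact lowerCentralSeries_antitone _ (Nat.le_add_left m n)

-- `G/γ₃` is a central extension of the cyclic group `G/γ₂`, hence abelian, so `γ₂ = γ₃`.
theorem isMulCommutative_of_isCyclic_abelianization [Group.IsNilpotent G]
    [IsCyclic (Abelianization G)] : IsMulCommutative G := by
  set N := (⊤ : Subgroup G).lowerCentralSeries 2
  have hN : N ≤ commutator G := Subgroup.lowerCentralSeries_antitone _ (Nat.le_succ 1)
  let f : G ⧸ N →* Abelianization G :=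
    QuotientGroup.lift N Abelianization.of (by rwa [Abelianization.ker_of])
  have hker : f.ker ≤ center (G ⧸ N) := by
    rintro ⟨x⟩ hx
    have hx : x ∈ commutator G := by rw [← Abelianization.ker_of]; exact hx
    exact map_lowerCentralSeries_le_center 1 (mem_map_of_mem _ hx)
  have : IsMulCommutative (G ⧸ N) := f.isMulCommutative_of_isCyclic_of_ker_le_center hker
  have h12 : commutator G ≤ N := by
    rw [← QuotientGroup.ker_mk' N, ← Subgroup.map_eq_bot_iff, ← top_lowerCentralSeries_one,
      map_lowerCentralSeries, map_top_of_surjective _ (QuotientGroup.mk'_surjective N),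
      lowerCentralSeries_one_eq_bot_iff]
    infer_instance
  rw [← lowerCentralSeries_one_eq_bot_iff]
  exact lowerCentralSeries_eq_bot_of_succ_eq (le_antisymm hN h12)

end LowerCentralSeries

section CommGroup

variable {p : ℕ} [Fact p.Prime] {A : Type*} [CommGroup A]

theorem orderOf_mul_eq_sq_of_pow_eq_one {u w : A} (hu : orderOf u = p ^ 2) (hw : w ^ p = 1) :
    orderOf (u * w) = p ^ 2 := by
  have hp := (Fact.out : p.Prime)
  refine orderOf_eq_prime_pow (n := 1) ?_ ?_
  · rw [pow_one, mul_pow, hw, mul_one]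
    exact pow_ne_one_of_lt_orderOf hp.ne_zero (by rw [hu]; nlinarith [hp.two_le])
  · rw [mul_pow, ← hu, pow_orderOf_eq_one, hu, sq, pow_mul, hw, one_pow, one_mul]

theorem orderOf_pow_mul_eq_prime {u v : A} (hu : orderOf u = p ^ 2) (hv : orderOf v = p)
    (hvu : v ∉ zpowers u) : orderOf (u ^ p * v) = p := by
  refine orderOf_eq_prime ?_ fun h => ?_
  · rw [mul_pow, ← pow_mul, ← sq, ← hu, ← hv, pow_orderOf_eq_one, pow_orderOf_eq_one, one_mul]
  · exact hvu (eq_inv_of_mul_eq_one_right h ▸ inv_mem (pow_mem (mem_zpowers u) p))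

theorem injOn_zpowers_mul {u : A} {D : Subgroup A} (h : ∀ w ∈ D, zpowers (u * w) ⊓ D = ⊥) :
    Set.InjOn (fun w => zpowers (u * w)) D := by
  intro w hw w' hw' (hww' : zpowers (u * w) = zpowers (u * w'))
  have : w' / w ∈ zpowers (u * w) ⊓ D := by
    refine mem_inf.mpr ⟨?_, div_mem hw' hw⟩
    have h1 : u * w' ∈ zpowers (u * w) := hww' ▸ mem_zpowers (u * w')
    simpa only [mul_div_mul_left_eq_div] using div_mem h1 (mem_zpowers (u * w))
  rw [h w hw, mem_bot, div_eq_one] at this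
  exact this.symm

variable [Finite A]

theorem zpowers_mul_inf_zpowers_eq_bot {u v w : A} (hu : orderOf u = p ^ 2) (hv : orderOf v = p)
    (hvu : v ∉ zpowers u) (hw : w ∈ zpowers v) : zpowers (u * w) ⊓ zpowers v = ⊥ := by
  rw [eq_bot_iff]
  intro x hx
  obtain ⟨hxC, hxD⟩ := mem_inf.mp hx
  obtain ⟨m, rfl⟩ := mem_zpowers_iff.mp hxC
  have hum : u ^ m = 1 := by
    have : u ^ m ∈ zpowers u ⊓ zpowers v :=
      ⟨zpow_mem (mem_zpowers u) m, by simpa [mul_zpow] using div_mem hxD (zpow_mem hw m)⟩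
    rwa [inf_zpowers_eq_bot_of_orderOf_eq_prime hv hvu, mem_bot] at this
  have hwm : w ^ m = 1 := by
    refine orderOf_dvd_iff_zpow_eq_one.mp (dvd_trans ?_ (orderOf_dvd_iff_zpow_eq_one.mpr hum))
    exact Int.natCast_dvd_natCast.mpr
      ((orderOf_dvd_of_mem_zpowers hw).trans (hv ▸ hu ▸ dvd_pow_self p two_ne_zero))
  rw [mem_bot, mul_zpow, hum, hwm, one_mul]

theorem mul_notMem_zpowers_mul {u v w x : A} (hu : orderOf u = p ^ 2) (hv : orderOf v = p)
    (hvu : v ∉ zpowers u) (hw : w ∈ zpowers v) (hx : x ∈ zpowers (u ^ p)) :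
    x * v ∉ zpowers (u * w) := by
  intro hxv
  have hwp : w ^ p = 1 := orderOf_dvd_iff_pow_eq_one.mp (hv ▸ orderOf_dvd_of_mem_zpowers hw)
  have hup : u ^ p = (u * w) ^ p := by rw [mul_pow, hwp, mul_one]
  have hx' : x ∈ zpowers (u * w) := zpowers_le.mpr (hup ▸ pow_mem (mem_zpowers _) p) hx
  have : v ∈ zpowers (u * w) ⊓ zpowers v :=
    mem_inf.mpr ⟨by simpa using div_mem hxv hx', mem_zpowers v⟩
  rw [zpowers_mul_inf_zpowers_eq_bot hu hv hvu hw, mem_bot] at this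
  exact (Fact.out : p.Prime).ne_one (hv ▸ orderOf_eq_one_iff.mpr this)

theorem exists_isAntichain_ncard_eq_add_two {u v : A} (hu : orderOf u = p ^ 2)
    (hv : orderOf v = p) (hvu : v ∉ zpowers u) :
    ∃ S : Set (Subgroup A), IsAntichain (· ≤ ·) S ∧ S.ncard = p + 2 := by
  have hp := (Fact.out : p.Prime)
  set D := zpowers v
  set E := zpowers (u ^ p * v)
  set C : A → Subgroup A := fun w => zpowers (u * w)
  have hcardC : ∀ w ∈ D, Nat.card (C w) = p ^ 2 := fun w hw => by
    rw [Nat.card_zpowers, orderOf_mul_eq_sq_of_pow_eq_one hu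
      (orderOf_dvd_iff_pow_eq_one.mp (hv ▸ orderOf_dvd_of_mem_zpowers hw))]
  have hcardD : Nat.card D = p := by rw [Nat.card_zpowers, hv]
  have hcardE : Nat.card E = p := by rw [Nat.card_zpowers, orderOf_pow_mul_eq_prime hu hv hvu]
  have hincomp : ∀ w ∈ D, ∀ Y ∈ ({D, E} : Set (Subgroup A)), ¬ C w ≤ Y ∧ ¬ Y ≤ C w := by
    intro w hw Y hY
    refine ⟨fun hle => ?_, fun hle => ?_⟩
    · have := card_le_of_le hle
      rw [hcardC w hw, show Nat.card Y = p by rcases hY with rfl | rfl <;> assumption] at this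
      nlinarith [hp.two_le]
    · rcases hY with rfl | rfl
      · exact mul_notMem_zpowers_mul hu hv hvu hw (one_mem _) (by simpa using hle (mem_zpowers v))
      · exact mul_notMem_zpowers_mul hu hv hvu hw (mem_zpowers _) (hle (mem_zpowers _))
  have hDE : D ≠ E := by
    intro h
    have : u ^ p ∈ zpowers u ⊓ D := mem_inf.mpr ⟨pow_mem (mem_zpowers u) p,
      by simpa using div_mem (h ▸ mem_zpowers _ : u ^ p * v ∈ D) (mem_zpowers v)⟩
    rw [inf_zpowers_eq_bot_of_orderOf_eq_prime hv hvu, mem_bot] at this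
    exact pow_ne_one_of_lt_orderOf hp.ne_zero (by rw [hu]; nlinarith [hp.two_le]) this
  refine ⟨C '' D ∪ {D, E}, ?_, ?_⟩
  · rw [isAntichain_union]
    refine ⟨isAntichain_of_card_eq (n := p ^ 2) ?_, isAntichain_of_card_eq (n := p) ?_, ?_⟩
    · rintro _ ⟨w, hw, rfl⟩; exact hcardC w hw
    · rintro Y (rfl | rfl) <;> assumption
    · rintro _ ⟨w, hw, rfl⟩ Y hY -
      exact hincomp w hw Y hY
  · rw [Set.ncard_union_eq ?_ (Set.toFinite _) (Set.toFinite _),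
      (injOn_zpowers_mul fun w hw => zpowers_mul_inf_zpowers_eq_bot hu hv hvu hw).ncard_image,
      Set.ncard_pair hDE, ← Nat.card_coe_set_eq, SetLike.coe_sort_coe, hcardD]
    rw [Set.disjoint_left]
    rintro _ ⟨w, hw, rfl⟩ hY
    exact (hincomp w hw _ hY).1 le_rfl

theorem IsPGroup.exists_orderOf_eq_prime_notMem_zpowers (hA : IsPGroup p A) {u : A}
    (hu : ∀ x : A, orderOf x ∣ orderOf u) (hne : zpowers u ≠ ⊤) :
    ∃ v : A, orderOf v = p ∧ v ∉ zpowers u := by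
  have hp := (Fact.out : p.Prime)
  have : Nontrivial (A ⧸ zpowers u) := QuotientGroup.nontrivial_iff.mpr hne
  obtain ⟨k, hk, hcard⟩ := (hA.to_quotient (zpowers u)).nontrivial_iff_card.mp this
  obtain ⟨w', hw⟩ := exists_prime_orderOf_dvd_card' (G := A ⧸ zpowers u) p
    (hcard ▸ dvd_pow_self p hk.ne')
  obtain ⟨w, rfl⟩ := QuotientGroup.mk_surjective w'
  have hwu : w ∉ zpowers u := by
    rw [← QuotientGroup.eq_one_iff]; exact fun h => hp.one_lt.ne' (by rw [← hw, h, orderOf_one])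
  obtain ⟨m, hm⟩ : ∃ m : ℕ, u ^ m = w ^ p := by
    rw [← Submonoid.mem_powers_iff, mem_powers_iff_mem_zpowers, ← QuotientGroup.eq_one_iff,
      QuotientGroup.mk_pow, ← hw, pow_orderOf_eq_one]
  obtain ⟨a, ha⟩ := IsPGroup.iff_orderOf.mp hA u
  have ha0 : a ≠ 0 := by
    rintro rfl
    refine hwu ?_
    have : orderOf w ∣ 1 := by simpa [ha] using hu w
    rw [orderOf_eq_one_iff.mp (Nat.dvd_one.mp this)]
    exact one_mem _
  obtain ⟨a, rfl⟩ := Nat.exists_eq_add_one_of_ne_zero ha0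
  obtain ⟨m, rfl⟩ : p ∣ m := by
    have h1 : u ^ (m * p ^ a) = 1 := by
      rw [pow_mul, hm, ← pow_mul, ← pow_succ', ← ha, ← orderOf_dvd_iff_pow_eq_one]
      exact hu w
    have h2 := orderOf_dvd_of_pow_eq_one h1
    rw [ha, pow_succ, mul_comm m] at h2
    exact Nat.dvd_of_mul_dvd_mul_left (pow_pos hp.pos a) h2
  refine ⟨w * (u ^ m)⁻¹, orderOf_eq_prime ?_ ?_, fun h => hwu ?_⟩
  · rw [mul_pow, inv_pow, ← pow_mul, mul_comm m p, hm, mul_inv_cancel]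
  · exact fun h => hwu (mul_inv_eq_one.mp h ▸ pow_mem (mem_zpowers u) m)
  · simpa using mul_mem h (pow_mem (mem_zpowers u) m)

theorem IsPGroup.exists_orderOf_eq_sq_of_not_isCyclic (hA : IsPGroup p A) (hcyc : ¬ IsCyclic A)
    {a : A} (ha : a ^ p ≠ 1) :
    ∃ u v : A, orderOf u = p ^ 2 ∧ orderOf v = p ∧ v ∉ zpowers u := by
  have hp := (Fact.out : p.Prime)
  obtain ⟨u, hu⟩ := Monoid.exists_orderOf_eq_exponent (G := A) Monoid.ExponentExists.of_finite
  have hmax : ∀ x : A, orderOf x ∣ orderOf u := hu ▸ Monoid.order_dvd_exponent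
  obtain ⟨v, hv, hvu⟩ := hA.exists_orderOf_eq_prime_notMem_zpowers hmax
    fun h => hcyc ⟨u, (eq_top_iff' _).mp h⟩
  obtain ⟨k, hk⟩ := IsPGroup.iff_orderOf.mp hA u
  have hk2 : 2 ≤ k := by
    by_contra! hk2
    have : orderOf u ∣ p ^ 1 := hk ▸ pow_dvd_pow p (by omega)
    exact ha (orderOf_dvd_iff_pow_eq_one.mp ((hmax a).trans (by simpa using this)))
  refine ⟨u ^ p ^ (k - 2), v, ?_, hv, fun h => hvu (zpowers_le.mpr (pow_mem (mem_zpowers u) _) h)⟩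
  rw [orderOf_pow_of_dvd (pow_ne_zero _ hp.ne_zero) (hk ▸ pow_dvd_pow p (by omega)), hk,
    Nat.pow_div (by omega) hp.pos]
  congr 1; omega

end CommGroup

namespace IsThinPGroup

variable {p : ℕ} {G : Type*} [Group G]

theorem of_surjective {Q : Type*} [Group Q] (hG : IsThinPGroup p G) {f : G →* Q}
    (hf : Function.Surjective f) : IsThinPGroup p Q := by
  intro S hnorm hanti
  have h := hG (comap f '' S) (by rintro _ ⟨N, hN, rfl⟩; exact (hnorm N hN).comap f) ?_
  · rwa [Set.ncard_image_of_injective _ (comap_injective hf)] at h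
  · rintro _ ⟨X, hX, rfl⟩ _ ⟨Y, hY, rfl⟩ hne hle
    exact hanti hX hY (ne_of_apply_ne _ hne) ((comap_le_comap_of_surjective hf).mp hle)

theorem card_le_sq_of_le_center [Finite G] [Fact p.Prime] (hG : IsThinPGroup p G)
    {W : Subgroup G} (hWZ : W ≤ center G) (hW : ∀ x ∈ W, x ^ p = 1) : Nat.card W ≤ p ^ 2 := by
  have hS := hG (zpowers '' ((W : Set G) \ {1}))
    (by rintro _ ⟨x, hx, rfl⟩; exact normal_of_le_center (zpowers_le.mpr (hWZ hx.1)))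
    (isAntichain_of_card_eq (n := p) (by
      rintro _ ⟨x, hx, rfl⟩; rw [Nat.card_zpowers, orderOf_eq_prime (hW x hx.1) hx.2]))
  have hcount := card_sub_one_le_mul_ncard_zpowers hW
  obtain ⟨q, rfl⟩ : ∃ q, p = q + 1 :=
    ⟨p - 1, (Nat.succ_pred_eq_of_pos (Fact.out : p.Prime).pos).symm⟩
  calc Nat.card W ≤ q * (zpowers '' ((W : Set G) \ {1})).ncard + 1 := by simpa using hcount
    _ ≤ q * (q + 1 + 1) + 1 := by gcongr
    _ = (q + 1) ^ 2 := by ring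

variable [Finite G]

theorem pow_mem_commutator (hp : p.Prime) (hpG : IsPGroup p G) (hthin : IsThinPGroup p G)
    (hna : ∃ a b : G, a * b ≠ b * a) (x : G) : x ^ p ∈ commutator G := by
  have : Fact p.Prime := ⟨hp⟩
  have : Group.IsNilpotent G := hpG.isNilpotent
  have hof : Function.Surjective (Abelianization.of : G →* Abelianization G) :=
    QuotientGroup.mk'_surjective (commutator G)
  rw [← Abelianization.ker_of, MonoidHom.mem_ker, map_pow]
  by_contra ha
  have hcyc : ¬ IsCyclic (Abelianization G) := fun _ => by
    obtain ⟨a, b, hab⟩ := hna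
    exact hab (isMulCommutative_of_isCyclic_abelianization.is_comm.comm a b)
  obtain ⟨u, v, hu, hv, hvu⟩ :=
    (hpG.of_surjective _ hof).exists_orderOf_eq_sq_of_not_isCyclic hcyc ha
  obtain ⟨S, hS, hcard⟩ := exists_isAntichain_ncard_eq_add_two hu hv hvu
  have := hthin.of_surjective hof S (fun H _ => normal_of_isMulCommutative H) hS
  omega

theorem pow_mem_lowerCentralSeries_succ (hp : p.Prime) (hpG : IsPGroup p G)
    (hthin : IsThinPGroup p G) (hna : ∃ a b : G, a * b ≠ b * a) :
    ∀ n, ∀ x ∈ (⊤ : Subgroup G).lowerCentralSeries n,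
      x ^ p ∈ (⊤ : Subgroup G).lowerCentralSeries (n + 1)
  | 0 => fun x _ => hthin.pow_mem_commutator hp hpG hna x
  | n + 1 => pow_mem_lowerCentralSeries_add_two (pow_mem_lowerCentralSeries_succ hp hpG hthin hna n)

end IsThinPGroup

/-- In a nonabelian finite thin `p`-group, every quotient `γ_i(G)/γ_{i+1}(G)` of consecutive
terms of the lower central series (`i ≥ 1`, i.e. all `n ≥ 0` in Mathlib's indexing) is
elementary abelian of order at most `p ^ 2`. -/
theorem thin_p_group_lcs_quotients_elementary_abelian
    {p : ℕ} (hp : p.Prime) {G : Type*} [Group G] [Finite G]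
    (hpG : IsPGroup p G) (hthin : IsThinPGroup p G)
    (hna : ∃ a b : G, a * b ≠ b * a) :
    ∀ n : ℕ,
      Nat.card (↥((⊤ : Subgroup G).lowerCentralSeries n) ⧸
          ((⊤ : Subgroup G).lowerCentralSeries (n + 1)).subgroupOf ((⊤ : Subgroup G).lowerCentralSeries n)) ≤ p ^ 2 ∧
      ∀ x : ↥((⊤ : Subgroup G).lowerCentralSeries n) ⧸
          ((⊤ : Subgroup G).lowerCentralSeries (n + 1)).subgroupOf ((⊤ : Subgroup G).lowerCentralSeries n), x ^ p = 1 := by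
  have : Fact p.Prime := ⟨hp⟩
  intro n
  set N := (⊤ : Subgroup G).lowerCentralSeries (n + 1)
  have hpow := hthin.pow_mem_lowerCentralSeries_succ hp hpG hna n
  refine ⟨?_, ?_⟩
  · change N.relIndex _ ≤ _
    rw [← QuotientGroup.ker_mk' N, relIndex_ker]
    refine (hthin.of_surjective (QuotientGroup.mk'_surjective N)).card_le_sq_of_le_center
      (map_lowerCentralSeries_le_center n) ?_
    rintro _ ⟨x, hx, rfl⟩
    rw [← map_pow, QuotientGroup.mk'_apply, QuotientGroup.eq_one_iff]
    exact hpow x hx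
  · intro x
    obtain ⟨x, rfl⟩ := QuotientGroup.mk_surjective x
    rw [← QuotientGroup.mk_pow, QuotientGroup.eq_one_iff, mem_subgroupOf, coe_pow]
    exact hpow x x.2
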